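/- Let q ∈ ℝ with 0 ≤ q < 1 and let a, b : ℕ → ℂ be finitely supported. Then Σ_n [n]_q! · (∂a)_n · conj(b_n) = Σ_n [n]_q! · a_n · conj((M_z ∂ I b)_n), where (∂a)_n = (n+1)a_{n+1} is differentiation, (I b)_n = b_{n−1}/[n]_q for n ≥ 1 and (I b)_0 = 0 is q-Jackson integration (which equals R_0* in H_{2,q}), and (M_z c)_n = c_{n−1}. Equivalently, in H_{2,q} the adjoint of differentiation satisfies ∂* z^k = ((k+1)/[k+1]_q) · z^{k+1} for all k ≥ 0, i.e. ∂* = M_z ∂ R_0*. -/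

import Mathlib

open Finset

/-- q-bracket `[n]_q = 1 + q + ⋯ + q^(n-1)` (real version). -/
noncomputable def qBracket (q : ℝ) (n : ℕ) : ℝ := ∑ j ∈ Finset.range n, q ^ j

/-- q-factorial `[n]_q! = [1]_q [2]_q ⋯ [n]_q`, with `[0]_q! = 1`. -/
noncomputable def qFact (q : ℝ) (n : ℕ) : ℝ := ∏ i ∈ Finset.range n, qBracket q (i + 1)

/-- Differentiation on coefficient sequences: `(∂a)_n = (n+1) a_(n+1)`. -/
def der (a : ℕ → ℂ) : ℕ → ℂ := fun n => (n + 1 : ℂ) * a (n + 1)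

/-- Multiplication by `z` on coefficient sequences. -/
def Mz (c : ℕ → ℂ) : ℕ → ℂ := fun n => if n = 0 then 0 else c (n - 1)

/-- The q-Jackson integration operator (`= R_0*` in `H_{2,q}`):
`(I b)_n = b_(n-1)/[n]_q` for `n ≥ 1`, `(I b)_0 = 0`. -/
noncomputable def Iq (q : ℝ) (b : ℕ → ℂ) : ℕ → ℂ :=
  fun n => if n = 0 then 0 else b (n - 1) / (qBracket q n : ℂ)

lemma qBracket_pos (q : ℝ) (hq0 : 0 ≤ q) (n : ℕ) : 0 < qBracket q (n + 1) := by
  have h1 : (1 : ℝ) ≤ qBracket q (n + 1) := by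
    have := Finset.single_le_sum (f := fun j => q ^ j)
      (fun j _ => pow_nonneg hq0 j) (Finset.mem_range.mpr (Nat.succ_pos n))
    simpa [qBracket] using this
  linarith

/-- In the q-Fock space `H_{2,q}` the adjoint of differentiation is `∂* = M_z ∂ R_0*`:
for all finitely supported `a, b`,
`Σ_n [n]_q! (∂a)_n conj(b_n) = Σ_n [n]_q! a_n conj((M_z ∂ I b)_n)`
(equivalently, `∂* z^k = ((k+1)/[k+1]_q) z^(k+1)` for all `k`). -/
theorem der_adjoint_eq_Mz_der_R0star (q : ℝ) (hq0 : 0 ≤ q) (hq1 : q < 1) (a b : ℕ → ℂ)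
    (ha : (Function.support a).Finite) (hb : (Function.support b).Finite) :
    ∑' n : ℕ, (qFact q n : ℂ) * der a n * (starRingEnd ℂ) (b n)
      = ∑' n : ℕ, (qFact q n : ℂ) * a n * (starRingEnd ℂ) (Mz (der (Iq q b)) n) := by
  set f : ℕ → ℂ := fun n => (qFact q n : ℂ) * der a n * (starRingEnd ℂ) (b n) with hf
  set g : ℕ → ℂ := fun n => (qFact q n : ℂ) * a n * (starRingEnd ℂ) (Mz (der (Iq q b)) n)
    with hg
  have hgsum : Summable g := by
    apply summable_of_ne_finset_zero (s := ha.toFinset)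
    intro n hn
    have hna : a n = 0 := by
      by_contra h
      exact hn (ha.mem_toFinset.mpr h)
    simp [hg, hna]
  have hshift : ∀ n : ℕ, g (n + 1) = f n := by
    intro n
    have hb0 : (qBracket q (n + 1) : ℝ) ≠ 0 := (qBracket_pos q hq0 n).ne'
    have hb0' : ((qBracket q (n + 1) : ℝ) : ℂ) ≠ 0 := by exact_mod_cast hb0
    have hfact : (qFact q (n + 1) : ℝ) = qFact q n * qBracket q (n + 1) := by
      simp [qFact, Finset.prod_range_succ]
    have hMz : Mz (der (Iq q b)) (n + 1)
        = ((n : ℂ) + 1) * (b n / ((qBracket q (n + 1) : ℝ) : ℂ)) := by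
      simp [Mz, der, Iq]
    simp only [hg, hf, hMz, der]
    rw [hfact]
    push_cast
    rw [map_mul, map_div₀]
    have h1 : (starRingEnd ℂ) ((n : ℂ) + 1) = (n : ℂ) + 1 := by
      simp
    have h2 : (starRingEnd ℂ) ((qBracket q (n + 1) : ℝ) : ℂ) = ((qBracket q (n + 1) : ℝ) : ℂ) :=
      Complex.conj_ofReal _
    rw [h1, h2]
    field_simp
  have hg0 : g 0 = 0 := by simp [hg, Mz]
  calc ∑' n, f n = ∑' n, g (n + 1) := by
        exact tsum_congr fun n => (hshift n).symm
    _ = g 0 + ∑' n, g (n + 1) := by rw [hg0, zero_add]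
    _ = ∑' n, g n := (Summable.tsum_eq_zero_add hgsum).symm
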